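/- Consider the greedy algorithm that, starting from an empty set, repeatedly adds a path surviving the maximum number of not-yet-survived fibers. If every path uses at most K fibers, the greedy algorithm terminates with a survivable path set of size at most OPT·(1 + log K), where OPT is the minimum size of a survivable path set. -/

import Mathlib

/-!
Let `S` be an optimal survivable set, `n = |S|`. The paths of `S` together survive every
currently unsurvived fiber, so one of them survives at least a `1/n` fraction of them, and
the greedy path survives at least as many: the unsurvived set shrinks by a factor
`1 - 1/n ≤ exp (-1/n)` per step. After the first step at most `K` fibers are unsurvived,
so fewer than one is left after `⌊n log K⌋ + n` steps once `n ≥ 2`; the cases `n ≤ 1` are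
immediate.
-/

open Finset Real

section Cover

variable {α : Type*} [DecidableEq α]

lemma card_le_card_mul_of_forall_card_filter_le {U : Finset α} {S : Finset (Finset α)} {r : ℕ}
    (hcover : ∀ f ∈ U, ∃ P ∈ S, f ∉ P) (hr : ∀ P ∈ S, #(U.filter (· ∉ P)) ≤ r) :
    #U ≤ #S * r :=
  calc #U ≤ #(S.biUnion fun P => U.filter (· ∉ P)) := card_le_card fun f hf => by
          obtain ⟨P, hP, hfP⟩ := hcover f hf
          exact mem_biUnion.2 ⟨P, hP, mem_filter.2 ⟨hf, hfP⟩⟩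
    _ ≤ ∑ P ∈ S, #(U.filter (· ∉ P)) := card_biUnion_le
    _ ≤ #S * r := by simpa using sum_le_card_nsmul S _ r hr

lemma card_mul_card_filter_mem_add_card_le {U g : Finset α} {S : Finset (Finset α)}
    (hcover : ∀ f ∈ U, ∃ P ∈ S, f ∉ P)
    (hgreedy : ∀ P ∈ S, #(U.filter (· ∉ P)) ≤ #(U.filter (· ∉ g))) :
    #S * #(U.filter (· ∈ g)) + #U ≤ #S * #U :=
  calc #S * #(U.filter (· ∈ g)) + #U
      ≤ #S * #(U.filter (· ∈ g)) + #S * #(U.filter (· ∉ g)) :=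
        Nat.add_le_add_left (card_le_card_mul_of_forall_card_filter_le hcover hgreedy) _
    _ = #S * #U := by rw [← mul_add, card_filter_add_card_filter_not]

end Cover

lemma le_exp_neg_div_mul_of_mul_succ_add_le {m : ℕ} {x : ℕ → ℕ} (hm : 0 < m)
    (hx : ∀ i, m * x (i + 1) + x i ≤ m * x i) (j : ℕ) :
    (x j : ℝ) ≤ exp (-j / m) * x 0 := by
  have hm : (0 : ℝ) < m := by exact_mod_cast hm
  have hstep : ∀ i, (x (i + 1) : ℝ) ≤ exp (-1 / m) * x i := by
    intro i
    have hxi : (m : ℝ) * x (i + 1) + x i ≤ m * x i := by exact_mod_cast hx i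
    have hexp : 1 - 1 / (m : ℝ) ≤ exp (-1 / m) := by
      rw [sub_eq_neg_add, ← neg_div]
      exact add_one_le_exp _
    calc (x (i + 1) : ℝ) ≤ (1 - 1 / m) * x i := by
          refine le_of_mul_le_mul_left ?_ hm
          rw [← mul_assoc, mul_sub, mul_one, mul_one_div_cancel hm.ne']
          linarith
      _ ≤ exp (-1 / m) * x i := by gcongr
  calc (x j : ℝ) ≤ exp (-1 / m) ^ j * x 0 :=
        le_geom (u := fun k => (x k : ℝ)) (exp_pos _).le j fun k _ => hstep k
    _ = exp (-j / m) * x 0 := by rw [← exp_nat_mul, mul_div, mul_neg_one]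

lemma eq_zero_of_mul_succ_add_le {n K : ℕ} {x : ℕ → ℕ} (hK : 1 ≤ K)
    (hx : ∀ i, n * x (i + 1) + x i ≤ n * x i) (hx1 : x 1 ≤ K) :
    x (⌊n * log K⌋₊ + n) = 0 := by
  rcases n with _ | _ | n
  · simpa using hx 0
  · simpa using hx ⌊(1 : ℕ) * log K⌋₊
  set m := n + 2
  set j := ⌊m * log K⌋₊ + m - 1
  have hK0 : (0 : ℝ) < K := by exact_mod_cast hK
  have hdecay : (x (j + 1) : ℝ) ≤ exp (-j / m) * K :=
    calc (x (j + 1) : ℝ) ≤ exp (-j / m) * x 1 :=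
          le_exp_neg_div_mul_of_mul_succ_add_le (x := fun i => x (i + 1)) (by positivity)
            (fun i => hx (i + 1)) j
      _ ≤ exp (-j / m) * K := by gcongr
  have hj : m * log K < j := by
    have hfloor : (⌊m * log K⌋₊ : ℝ) + 1 ≤ j := by
      exact_mod_cast (by omega : ⌊m * log K⌋₊ + 1 ≤ j)
    linarith [Nat.lt_floor_add_one (m * log K)]
  have hlt : exp (-j / m) * K < 1 := by
    calc exp (-j / m) * K < exp (-log K) * K := by
          gcongr
          rw [neg_div, neg_lt_neg_iff, lt_div_iff₀ (by positivity)]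
          linarith
      _ = 1 := by rw [exp_neg, exp_log hK0, inv_mul_cancel₀ hK0.ne']
  rw [show ⌊m * log K⌋₊ + m = j + 1 by omega, ← Nat.lt_one_iff]
  exact_mod_cast hdecay.trans_lt hlt

theorem stmt_1_general {α : Type*} [DecidableEq α] (F : Finset α) (Fam : Finset (Finset α))
    (K OPT : ℕ) (hK1 : 1 ≤ K)
    (hK : ∀ P ∈ Fam, P.card ≤ K)
    (hOPT : ∃ S ⊆ Fam, (∀ f ∈ F, ∃ P ∈ S, f ∉ P) ∧ S.card = OPT)
    (U : ℕ → Finset α) (g : ℕ → Finset α)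
    (hU0 : U 0 = F)
    (hg : ∀ i, U i ≠ ∅ → g i ∈ Fam)
    (hUsucc : ∀ i, U (i + 1) = (U i).filter (fun f => f ∈ g i))
    (hgreedy : ∀ i, U i ≠ ∅ → ∀ P ∈ Fam,
      ((U i).filter (fun f => f ∉ P)).card ≤ ((U i).filter (fun f => f ∉ g i)).card) :
    ∃ t : ℕ, U t = ∅ ∧ (t : ℝ) ≤ (OPT : ℝ) * (1 + Real.log K) := by
  obtain ⟨S, hSFam, hScover, rfl⟩ := hOPT
  have hUF : ∀ i, U i ⊆ F := by
    intro i
    induction i with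
    | zero => exact hU0.le
    | succ i ih => exact (hUsucc i ▸ filter_subset _ _).trans ih
  have hcontract : ∀ i, #S * #(U (i + 1)) + #(U i) ≤ #S * #(U i) := by
    intro i
    by_cases hi : U i = ∅
    · simp [hUsucc, hi]
    rw [hUsucc]
    exact card_mul_card_filter_mem_add_card_le (fun f hf => hScover f (hUF i hf))
      fun P hP => hgreedy i hi P (hSFam hP)
  have hU1 : #(U 1) ≤ K := by
    by_cases h0 : U 0 = ∅
    · simp [hUsucc, h0]
    rw [hUsucc]
    exact (card_le_card fun f hf => (mem_filter.1 hf).2).trans (hK _ (hg 0 h0))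
  refine ⟨⌊#S * log K⌋₊ + #S, card_eq_zero.1 <|
    eq_zero_of_mul_succ_add_le (x := fun i => #(U i)) hK1 hcontract hU1, ?_⟩
  have := Nat.floor_le (mul_nonneg (Nat.cast_nonneg #S) (log_nonneg (Nat.one_le_cast.2 hK1)))
  push_cast
  linarith

/-- Greedy algorithm: starting from all fibers `F` unsurvived (`U 0 = F`), at each step
the greedy algorithm picks a path `g i ∈ Fam` surviving the maximum number of currently
unsurvived fibers; the unsurvived set is updated to the unsurvived fibers used by `g i`.
If every path uses at most `K ≥ 1` fibers and a survivable path set of minimum size `OPT`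
exists, then greedy terminates within `OPT * (1 + log K)` steps with all fibers survived
(the selected paths then form a survivable set of that size). -/
theorem stmt_1 {α : Type*} [DecidableEq α] (F : Finset α) (Fam : Finset (Finset α))
    (K OPT : ℕ) (hK1 : 1 ≤ K)
    (hK : ∀ P ∈ Fam, P.card ≤ K)
    (hOPT : ∃ S ⊆ Fam, (∀ f ∈ F, ∃ P ∈ S, f ∉ P) ∧ S.card = OPT)
    (hOPTmin : ∀ S ⊆ Fam, (∀ f ∈ F, ∃ P ∈ S, f ∉ P) → OPT ≤ S.card)
    (U : ℕ → Finset α) (g : ℕ → Finset α)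
    (hU0 : U 0 = F)
    (hg : ∀ i, U i ≠ ∅ → g i ∈ Fam)
    (hUsucc : ∀ i, U (i + 1) = (U i).filter (fun f => f ∈ g i))
    (hgreedy : ∀ i, U i ≠ ∅ → ∀ P ∈ Fam,
      ((U i).filter (fun f => f ∉ P)).card ≤ ((U i).filter (fun f => f ∉ g i)).card) :
    ∃ t : ℕ, U t = ∅ ∧ (t : ℝ) ≤ (OPT : ℝ) * (1 + Real.log K) :=
  stmt_1_general F Fam K OPT hK1 hK hOPT U g hU0 hg hUsucc hgreedy
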